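/- arXiv:2105.07980 — 6 statements merged into one kernel-verified Lean document; each statement's English description precedes it below -/
import Mathlib

section
/- A path-connected topological space X admits a continuous global motion planning algorithm (i.e., the evaluation map e : PX → X × X, e(γ) = (γ(0), γ(1)), admits a continuous section) if and only if X is contractible. -/
/-!
A continuous section `s` of the endpoint map is a homotopy between any two maps `f g : Y → X`,
namely `(t, y) ↦ s (f y, g y) t`; in particular `id_X` is null-homotopic. Conversely, a
null-homotopy `H` of `id_X` contracting `X` to `x₀` yields the section sending `(a, b)` to the
track of `a` under `H` followed by the reversed track of `b`.
-/

open unitInterval ContinuousMap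

section

variable {X Y : Type*} [TopologicalSpace X] [TopologicalSpace Y]

def IsMotionPlanner (s : C(X × X, C(I, X))) : Prop :=
  ∀ p : X × X, s p 0 = p.1 ∧ s p 1 = p.2

def ContinuousMap.Homotopy.ofMotionPlanner {s : C(X × X, C(I, X))} (hs : IsMotionPlanner s)
    (f g : C(Y, X)) : f.Homotopy g where
  toFun q := s (f q.2, g q.2) q.1
  continuous_toFun := by fun_prop
  map_zero_left y := (hs _).1
  map_one_left y := (hs _).2

theorem ContractibleSpace.of_motionPlanner [Nonempty X] {s : C(X × X, C(I, X))}
    (hs : IsMotionPlanner s) : ContractibleSpace X :=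
  (contractible_iff_id_nullhomotopic X).2
    ⟨Classical.arbitrary X, ⟨Homotopy.ofMotionPlanner hs _ _⟩⟩

noncomputable def ContinuousMap.Homotopy.motionPlanner {x₀ : X}
    (H : (ContinuousMap.id X).Homotopy (const X x₀)) : C(X × X, C(I, X)) :=
  ContinuousMap.curry
    ⟨fun q : (X × X) × I => ((H.evalAt q.1.1).trans (H.evalAt q.1.2).symm) q.2,
      Path.trans_continuous_family (fun p : X × X => H.evalAt p.1)
        (H.continuous.comp (continuous_snd.prodMk (continuous_fst.comp continuous_fst))) _
        (Path.symm_continuous_family (fun p : X × X => H.evalAt p.2)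
          (H.continuous.comp (continuous_snd.prodMk (continuous_snd.comp continuous_fst))))⟩

theorem ContinuousMap.Homotopy.isMotionPlanner_motionPlanner {x₀ : X}
    (H : (ContinuousMap.id X).Homotopy (const X x₀)) : IsMotionPlanner H.motionPlanner :=
  fun p => ⟨((H.evalAt p.1).trans (H.evalAt p.2).symm).source,
    ((H.evalAt p.1).trans (H.evalAt p.2).symm).target⟩

theorem ContractibleSpace.exists_motionPlanner [ContractibleSpace X] :
    ∃ s : C(X × X, C(I, X)), IsMotionPlanner s := by
  obtain ⟨x₀, ⟨H⟩⟩ := id_nullhomotopic X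
  exact ⟨H.motionPlanner, H.isMotionPlanner_motionPlanner⟩

end

/-- A path-connected space admits a continuous global motion planning algorithm
(a continuous section of the evaluation map `γ ↦ (γ 0, γ 1)`) iff it is contractible. -/
theorem global_section_iff_contractible {X : Type*} [TopologicalSpace X]
    [PathConnectedSpace X] :
    (∃ s : C(X × X, C(I, X)), ∀ p : X × X, s p 0 = p.1 ∧ s p 1 = p.2) ↔
      ContractibleSpace X :=
  ⟨fun ⟨_, hs⟩ => ContractibleSpace.of_motionPlanner hs,
    fun _ => ContractibleSpace.exists_motionPlanner⟩
end

section
/- The topological complexity of a space X equals 1 if and only if X is contractible. -/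
open unitInterval

/-- A continuous local motion-planning section over `U ⊆ X × X`. -/
def IsMotionSection {X : Type*} [TopologicalSpace X] (U : Set (X × X)) : Prop :=
  ∃ s : C(U, C(I, X)), ∀ p : U, s p 0 = (p : X × X).1 ∧ s p 1 = (p : X × X).2

/-- `X × X` can be covered by `k` open sets, each admitting a continuous local section. -/
def HasTCCover (X : Type*) [TopologicalSpace X] (k : ℕ) : Prop :=
  ∃ U : Fin k → Set (X × X), (∀ i, IsOpen (U i)) ∧ (⋃ i, U i) = Set.univ ∧
    ∀ i, IsMotionSection (U i)

/-- Farber's topological complexity (unreduced; `⊤` if no finite cover works). -/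
noncomputable def topologicalComplexity (X : Type*) [TopologicalSpace X] : ℕ∞ :=
  sInf ((↑) '' {k : ℕ | 1 ≤ k ∧ HasTCCover X k})

/-!
A section of the path fibration over `U ⊆ X × X` is the same thing as a homotopy between the
two projections restricted to `U`, so `TC(X) = 1` says exactly that `pr₁ ≃ pr₂ : X × X → X`.
Precomposing with `x ↦ (x, x₀)` turns such a homotopy into a null-homotopy of `id_X`; conversely,
`id ≃ const x₀` gives `pr₁ = id ∘ pr₁ ≃ const x₀ = const x₀ ∘ pr₂ ≃ id ∘ pr₂ = pr₂`.
-/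

open ContinuousMap

section

variable {X : Type*} [TopologicalSpace X]

theorem topologicalComplexity_eq_one_iff :
    topologicalComplexity X = 1 ↔ HasTCCover X 1 := by
  constructor
  · intro h
    obtain ⟨k, ⟨-, hk⟩, hk1⟩ : topologicalComplexity X ∈ _ :=
      csInf_mem (Set.nonempty_iff_ne_empty.mpr fun hempty => by
        simp [topologicalComplexity, hempty] at h)
    rw [h, Nat.cast_eq_one] at hk1
    exact hk1 ▸ hk
  · intro h
    refine le_antisymm (sInf_le ⟨1, ⟨le_rfl, h⟩, rfl⟩) (le_sInf ?_)
    rintro _ ⟨k, ⟨hk, -⟩, rfl⟩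
    exact_mod_cast hk

theorem hasTCCover_one_iff :
    HasTCCover X 1 ↔ IsMotionSection (Set.univ : Set (X × X)) := by
  constructor
  · rintro ⟨U, -, hcover, hsec⟩
    rw [← Set.iSup_eq_iUnion, iSup_unique] at hcover
    exact hcover ▸ hsec default
  · intro h
    exact ⟨fun _ => Set.univ, fun _ => isOpen_univ, Set.iUnion_const _, fun _ => h⟩

theorem isMotionSection_iff_homotopic (U : Set (X × X)) :
    IsMotionSection U ↔ (fst.restrict U : C(U, X)).Homotopic (snd.restrict U) := by
  constructor
  · rintro ⟨s, hs⟩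
    exact ⟨{ toContinuousMap := s.uncurry.comp prodSwap
             map_zero_left := fun p => (hs p).1
             map_one_left := fun p => (hs p).2 }⟩
  · rintro ⟨H⟩
    exact ⟨(H.toContinuousMap.comp prodSwap).curry, fun p => ⟨H.apply_zero p, H.apply_one p⟩⟩

theorem isMotionSection_univ_iff_homotopic :
    IsMotionSection (Set.univ : Set (X × X)) ↔ (fst : C(X × X, X)).Homotopic snd := by
  rw [isMotionSection_iff_homotopic]
  let e : C(X × X, (Set.univ : Set (X × X))) := ⟨fun p => ⟨p, trivial⟩, by fun_prop⟩
  exact ⟨fun h => h.comp (.refl e), fun h => h.comp (.refl (restrict _ (.id _)))⟩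

theorem homotopic_fst_snd_iff_contractibleSpace [Nonempty X] :
    (fst : C(X × X, X)).Homotopic snd ↔ ContractibleSpace X := by
  rw [contractible_iff_id_nullhomotopic]
  constructor
  · intro h
    obtain ⟨x₀⟩ := ‹Nonempty X›
    exact ⟨x₀, h.comp (.refl ((ContinuousMap.id X).prodMk (const X x₀)))⟩
  · rintro ⟨x₀, h⟩
    exact (h.comp (.refl fst)).trans (h.symm.comp (.refl snd))

end

/-- `TC(X) = 1` iff `X` is contractible. -/
theorem tc_eq_one_iff_contractible {X : Type*} [TopologicalSpace X] [Nonempty X] :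
    topologicalComplexity X = 1 ↔ ContractibleSpace X := by
  rw [topologicalComplexity_eq_one_iff, hasTCCover_one_iff, isMotionSection_univ_iff_homotopic,
    homotopic_fst_snd_iff_contractibleSpace]
end

section
/- If X and Y have the same homotopy type, then TC(X) = TC(Y). -/
open unitInterval

lemma hasTCCover_of_homotopyEquiv {X Y : Type*} [TopologicalSpace X] [TopologicalSpace Y]
    (e : ContinuousMap.HomotopyEquiv X Y) {k : ℕ} (h : HasTCCover Y k) : HasTCCover X k := by
  classical
  obtain ⟨V, hVopen, hVcover, hVsec⟩ := h
  set f : C(X, Y) := e.toFun with hf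
  set g : C(Y, X) := e.invFun with hg
  obtain ⟨H⟩ := e.left_inv
  -- the path x ⇝ g (f x) given by the homotopy (reversed direction: from g(f x) to x)
  let pth : ∀ x : X, Path (g (f x)) x := fun x =>
    { toFun := fun t => H (t, x)
      continuous_toFun := H.continuous.comp (Continuous.prodMk continuous_id continuous_const)
      source' := H.apply_zero x
      target' := H.apply_one x }
  have hpth : ∀ {ι : Type} [TopologicalSpace ι] (u : ι → X), Continuous u →
      Continuous ↿fun i => pth (u i) := by
    intro ι _ u hu
    exact H.continuous.comp ((continuous_snd).prodMk (hu.comp continuous_fst))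
  refine ⟨fun i => (fun p : X × X => (f p.1, f p.2)) ⁻¹' (V i), fun i =>
    (hVopen i).preimage ((f.continuous.comp continuous_fst).prodMk
      (f.continuous.comp continuous_snd)), ?_, ?_⟩
  · rw [← Set.preimage_iUnion, hVcover, Set.preimage_univ]
  · intro i
    obtain ⟨s, hs⟩ := hVsec i
    set U : Set (X × X) := (fun p : X × X => (f p.1, f p.2)) ⁻¹' (V i) with hU
    let q : U → V i := fun p => ⟨(f p.1.1, f p.1.2), p.2⟩
    have hq : Continuous q := Continuous.subtype_mk
      (((f.continuous.comp continuous_fst).prodMk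
        (f.continuous.comp continuous_snd)).comp continuous_subtype_val) _
    let mid : ∀ p : U, Path (g (f p.1.1)) (g (f p.1.2)) := fun p =>
      { toFun := fun t => g (s (q p) t)
        continuous_toFun := g.continuous.comp (s (q p)).continuous
        source' := congrArg g (hs (q p)).1
        target' := congrArg g (hs (q p)).2 }
    have hmid : Continuous ↿mid := by
      have : Continuous fun pt : U × I => s (q pt.1) pt.2 := by
        have := (s.uncurry).continuous
        exact this.comp ((hq.comp continuous_fst).prodMk continuous_snd)
      exact g.continuous.comp this
    let Γ : ∀ p : U, Path (p.1.1) (p.1.2) := fun p =>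
      ((pth p.1.1).symm.trans ((mid p).trans (pth p.1.2)))
    have hΓ : Continuous ↿Γ := by
      apply Path.trans_continuous_family
      · have h1 : Continuous ↿fun p : U => pth (p : X × X).1 :=
          H.continuous.comp (continuous_snd.prodMk
            ((continuous_fst.comp continuous_subtype_val).comp continuous_fst))
        exact Path.symm_continuous_family _ h1
      · apply Path.trans_continuous_family
        · exact hmid
        · exact H.continuous.comp (continuous_snd.prodMk
            ((continuous_snd.comp continuous_subtype_val).comp continuous_fst))
    refine ⟨ContinuousMap.curry ⟨↿Γ, hΓ⟩, fun p => ?_⟩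
    constructor
    · show (Γ p) 0 = _
      simp
    · show (Γ p) 1 = _
      simp

/-- Topological complexity is a homotopy invariant. -/
theorem tc_homotopy_invariant {X Y : Type*} [TopologicalSpace X] [TopologicalSpace Y]
    (e : ContinuousMap.HomotopyEquiv X Y) :
    topologicalComplexity X = topologicalComplexity Y := by
  unfold topologicalComplexity
  congr 1
  ext n
  simp only [Set.mem_image, Set.mem_setOf_eq]
  constructor <;> rintro ⟨k, ⟨hk1, hk2⟩, rfl⟩
  · exact ⟨k, ⟨hk1, hasTCCover_of_homotopyEquiv e.symm hk2⟩, rfl⟩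
  · exact ⟨k, ⟨hk1, hasTCCover_of_homotopyEquiv e hk2⟩, rfl⟩
end

section
/- Given a continuous local section s : U → PX of the evaluation map over an open set U ⊆ X × X, a continuous map g : Y → X, a continuous map f : X → Y, and a homotopy H : Y × [0,1] → Y with H₀ = id_Y and H₁ = f ∘ g, the formula s̃(y₁,y₂)(t) = H(y₁, 3t) for t ∈ [0,1/3], f(s(g(y₁),g(y₂))(3t−1)) for t ∈ [1/3,2/3], and H(y₂, 3−3t) for t ∈ [2/3,1], defines a continuous local section s̃ : V → PY of the evaluation map over V = (g × g)⁻¹(U) ⊆ Y × Y. -/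
open unitInterval

/-- A continuous local section over `U ⊆ X × X`, a map `g : Y → X`, a map `f : X → Y` and a
homotopy `H` from `id_Y` to `f ∘ g` induce, by the explicit concatenation formula, a continuous
local section over `V = (g × g)⁻¹(U) ⊆ Y × Y`. -/
theorem induced_local_section {X Y : Type*} [TopologicalSpace X] [TopologicalSpace Y]
    (U : Set (X × X)) (hU : IsOpen U)
    (s : C(U, C(I, X))) (hs : ∀ p : U, s p 0 = (p : X × X).1 ∧ s p 1 = (p : X × X).2)
    (g : C(Y, X)) (f : C(X, Y)) (H : C(Y × I, Y))
    (hH0 : ∀ y, H (y, 0) = y) (hH1 : ∀ y, H (y, 1) = f (g y))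
    (st : ((fun p : Y × Y => (g p.1, g p.2)) ⁻¹' U) → I → Y)
    (hst : ∀ p : ((fun p : Y × Y => (g p.1, g p.2)) ⁻¹' U), ∀ t : I,
      ((t : ℝ) ≤ 1 / 3 →
        st p t = H ((p : Y × Y).1, Set.projIcc (0 : ℝ) 1 zero_le_one (3 * (t : ℝ)))) ∧
      (1 / 3 ≤ (t : ℝ) → (t : ℝ) ≤ 2 / 3 →
        st p t = f (s ⟨(g (p : Y × Y).1, g (p : Y × Y).2), p.2⟩
          (Set.projIcc (0 : ℝ) 1 zero_le_one (3 * (t : ℝ) - 1)))) ∧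
      (2 / 3 ≤ (t : ℝ) →
        st p t = H ((p : Y × Y).2, Set.projIcc (0 : ℝ) 1 zero_le_one (3 - 3 * (t : ℝ))))) :
    Continuous (Function.uncurry st) ∧
      ∀ p : ((fun p : Y × Y => (g p.1, g p.2)) ⁻¹' U),
        st p 0 = (p : Y × Y).1 ∧ st p 1 = (p : Y × Y).2 := by
  let V := ((fun p : Y × Y => (g p.1, g p.2)) ⁻¹' U)
  set F1 : V × I → Y := fun q => H ((q.1 : Y × Y).1,
    Set.projIcc (0 : ℝ) 1 zero_le_one (3 * (q.2 : ℝ))) with hF1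
  set F2 : V × I → Y := fun q => f (s ⟨(g (q.1 : Y × Y).1, g (q.1 : Y × Y).2), q.1.2⟩
    (Set.projIcc (0 : ℝ) 1 zero_le_one (3 * (q.2 : ℝ) - 1))) with hF2
  set F3 : V × I → Y := fun q => H ((q.1 : Y × Y).2,
    Set.projIcc (0 : ℝ) 1 zero_le_one (3 - 3 * (q.2 : ℝ))) with hF3
  have hc1 : Continuous F1 := by
    apply H.continuous.comp
    exact (continuous_subtype_val.comp continuous_fst).fst.prodMk
      ((continuous_projIcc.comp (continuous_const.mul
        (continuous_subtype_val.comp continuous_snd))))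
  have hin : Continuous (fun q : ↑V × ↑I =>
      (((⟨(g (q.1 : Y × Y).1, g (q.1 : Y × Y).2), q.1.2⟩ : U)),
        Set.projIcc (0 : ℝ) 1 zero_le_one (3 * (q.2 : ℝ) - 1))) := by
    apply Continuous.prodMk
    · apply Continuous.subtype_mk
      exact (g.continuous.comp (continuous_subtype_val.comp continuous_fst).fst).prodMk
        (g.continuous.comp (continuous_subtype_val.comp continuous_fst).snd)
    · exact continuous_projIcc.comp ((continuous_const.mul
        (continuous_subtype_val.comp continuous_snd)).sub continuous_const)
  have hc2 : Continuous F2 :=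
    f.continuous.comp (s.uncurry.continuous.comp hin)
  have hc3 : Continuous F3 := by
    apply H.continuous.comp
    exact (continuous_subtype_val.comp continuous_fst).snd.prodMk
      ((continuous_projIcc.comp (continuous_const.sub (continuous_const.mul
        (continuous_subtype_val.comp continuous_snd)))))
  have heq : Function.uncurry st = fun q : V × I =>
      if (q.2 : ℝ) ≤ 1 / 3 then F1 q
      else if (q.2 : ℝ) ≤ 2 / 3 then F2 q else F3 q := by
    funext q
    obtain ⟨p, t⟩ := q
    obtain ⟨h1, h2, h3⟩ := hst p t
    show st p t = _
    by_cases ht1 : (t : ℝ) ≤ 1 / 3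
    · rw [if_pos ht1]; exact h1 ht1
    · rw [if_neg ht1]
      by_cases ht2 : (t : ℝ) ≤ 2 / 3
      · rw [if_pos ht2]; exact h2 (le_of_not_ge ht1) ht2
      · rw [if_neg ht2]; exact h3 (le_of_not_ge ht2)
  constructor
  · rw [heq]
    apply Continuous.if_le _ _ (continuous_subtype_val.comp continuous_snd) continuous_const
    · intro q hq
      have hq' : (q.2 : ℝ) = 1 / 3 := hq
      have e1 : Set.projIcc (0 : ℝ) 1 zero_le_one (3 * (q.2 : ℝ)) = 1 := by
        rw [hq']; norm_num [Set.projIcc]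
      have e2 : Set.projIcc (0 : ℝ) 1 zero_le_one (3 * (q.2 : ℝ) - 1) = 0 := by
        rw [hq']; norm_num [Set.projIcc]
      rw [if_pos (by rw [hq']; norm_num : (q.2 : ℝ) ≤ 2 / 3)]
      show H _ = f (s _ _)
      rw [e1, e2, hH1, (hs _).1]
    · exact hc1
    · apply Continuous.if_le hc2 hc3 (continuous_subtype_val.comp continuous_snd)
        continuous_const
      intro q hq
      have hq' : (q.2 : ℝ) = 2 / 3 := hq
      have e1 : Set.projIcc (0 : ℝ) 1 zero_le_one (3 * (q.2 : ℝ) - 1) = 1 := by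
        rw [hq']; norm_num [Set.projIcc]
      have e2 : Set.projIcc (0 : ℝ) 1 zero_le_one (3 - 3 * (q.2 : ℝ)) = 1 := by
        rw [hq']; norm_num [Set.projIcc]
      show f (s _ _) = H _
      rw [e1, e2, hH1, (hs _).2]
  · intro p
    obtain ⟨h1, -, -⟩ := hst p 0
    obtain ⟨-, -, h3⟩ := hst p 1
    constructor
    · rw [h1 (by norm_num)]
      have : Set.projIcc (0 : ℝ) 1 zero_le_one (3 * ((0 : I) : ℝ)) = 0 := by
        norm_num [Set.projIcc]
      rw [this, hH0]
    · rw [h3 (by norm_num)]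
      have : Set.projIcc (0 : ℝ) 1 zero_le_one (3 - 3 * ((1 : I) : ℝ)) = 0 := by
        norm_num [Set.projIcc]
      rw [this, hH0]
end

section
/- For any path-connected space X, cat(X) ≤ TC(X) ≤ cat(X × X). -/
open unitInterval

/-- `X` can be covered by `k` open sets, each null-homotopic in `X`. -/
def HasCatCover (X : Type*) [TopologicalSpace X] (k : ℕ) : Prop :=
  ∃ U : Fin k → Set X, (∀ i, IsOpen (U i)) ∧ (⋃ i, U i) = Set.univ ∧
    ∀ i, ∃ x₀ : X, ContinuousMap.Homotopic
      ⟨Subtype.val, continuous_subtype_val⟩ (ContinuousMap.const (U i) x₀)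

/-- The (unreduced) Lusternik–Schnirelmann category. -/
noncomputable def lsCat (X : Type*) [TopologicalSpace X] : ℕ∞ :=
  sInf ((↑) '' {k : ℕ | 1 ≤ k ∧ HasCatCover X k})

/-!
If `U ⊆ X × X` carries a motion planner `s`, then on the slice `{x | (x₀, x) ∈ U}` the paths
`s (x₀, x)` contract the slice to `x₀`; slicing a motion-planning cover at a base point thus gives
a categorical cover of `X`. Conversely, a null-homotopy of `W ⊆ X × X` to a point `c` moves each
`(x, y) ∈ W` continuously to `c`; following the first coordinate from `x` to `c.1`, a fixed path
from `c.1` to `c.2`, and the second coordinate back from `c.2` to `y` is a motion planner on `W`.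
-/

open ContinuousMap

section

variable {X : Type*} [TopologicalSpace X]

theorem IsMotionSection.homotopic_const_preimage {U : Set (X × X)} (hU : IsMotionSection U)
    (x₀ : X) :
    Homotopic (⟨Subtype.val, continuous_subtype_val⟩ : C(Prod.mk x₀ ⁻¹' U, X))
      (const _ x₀) := by
  obtain ⟨s, hs⟩ := hU
  let slice : C(Prod.mk x₀ ⁻¹' U, U) :=
    ⟨fun x => ⟨(x₀, x), x.2⟩, by fun_prop⟩
  let H : C(I × Prod.mk x₀ ⁻¹' U, X) := (s.comp slice).uncurry.comp .prodSwap
  exact .symm ⟨⟨H, fun x => (hs (slice x)).1, fun x => (hs (slice x)).2⟩⟩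

theorem HasTCCover.hasCatCover [Nonempty X] {k : ℕ} (h : HasTCCover X k) : HasCatCover X k := by
  obtain ⟨U, hopen, hcover, hsection⟩ := h
  obtain ⟨x₀⟩ := ‹Nonempty X›
  refine ⟨fun i => Prod.mk x₀ ⁻¹' U i, fun i => (hopen i).preimage (by fun_prop), ?_,
    fun i => ⟨x₀, (hsection i).homotopic_const_preimage x₀⟩⟩
  rw [← Set.preimage_iUnion, hcover, Set.preimage_univ]

theorem isMotionSection_of_continuous_family {U : Set (X × X)}
    (γ : ∀ p : U, Path (p : X × X).1 (p : X × X).2) (hγ : Continuous ↿γ) : IsMotionSection U :=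
  ⟨ContinuousMap.curry ⟨↿γ, hγ⟩, fun p => ⟨(γ p).source, (γ p).target⟩⟩

theorem isMotionSection_of_homotopic_const [PathConnectedSpace X] {W : Set (X × X)} {c : X × X}
    (h : Homotopic (⟨Subtype.val, continuous_subtype_val⟩ : C(W, X × X)) (const W c)) :
    IsMotionSection W := by
  obtain ⟨F⟩ := h
  let toFst : ∀ p : W, Path (p : X × X).1 c.1 := fun p => (F.evalAt p).map continuous_fst
  let fromSnd : ∀ p : W, Path c.2 (p : X × X).2 := fun p => ((F.evalAt p).map continuous_snd).symm
  let middle : Path c.1 c.2 := (PathConnectedSpace.joined c.1 c.2).somePath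
  have hFst : Continuous ↿toFst := continuous_fst.comp (F.continuous.comp continuous_swap)
  have hSnd : Continuous ↿fromSnd := Path.symm_continuous_family _
    (continuous_snd.comp (F.continuous.comp continuous_swap))
  refine isMotionSection_of_continuous_family (fun p => (toFst p).trans (middle.trans (fromSnd p)))
    (Path.trans_continuous_family _ hFst _ ?_)
  exact Path.trans_continuous_family _ (middle.continuous.comp continuous_snd) _ hSnd

theorem HasCatCover.hasTCCover [PathConnectedSpace X] {k : ℕ} (h : HasCatCover (X × X) k) :
    HasTCCover X k := by
  obtain ⟨W, hopen, hcover, hnull⟩ := h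
  exact ⟨W, hopen, hcover, fun i => (hnull i).elim fun _ => isMotionSection_of_homotopic_const⟩

end

/-- For a path-connected space, `cat(X) ≤ TC(X) ≤ cat(X × X)`. -/
theorem cat_le_tc_le_cat_prod {X : Type*} [TopologicalSpace X] [PathConnectedSpace X] :
    lsCat X ≤ topologicalComplexity X ∧ topologicalComplexity X ≤ lsCat (X × X) :=
  ⟨sInf_le_sInf (Set.image_mono fun _ hk => ⟨hk.1, hk.2.hasCatCover⟩),
    sInf_le_sInf (Set.image_mono fun _ hk => ⟨hk.1, hk.2.hasTCCover⟩)⟩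
end

section
/- The topological complexity of the circle S¹ is exactly 2: there exist two open sets U₁ = {(a,b) ∈ S¹ × S¹ : a ≠ −b} and U₂ = {(a,b) ∈ S¹ × S¹ : a ≠ b} covering S¹ × S¹, each admitting a continuous local section of the path fibration, and no single continuous global section exists since S¹ is not contractible. -/
/-!
On the open set where `b ≠ -(e^{iφ} a)` the angle `φ + arg (b / (e^{iφ} a))` from `a` to `b`
is continuous, because the cut of `arg` is exactly the excluded locus; rotating `a` through
this angle is a motion planner. The choices `φ = 0` and `φ = π` give the two sets of the cover.
A single global planner would contract `S¹` to a point, which is impossible because the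
universal cover `exp : ℝ → S¹` identifies `π₁(S¹)` with `2πℤ`.
-/

open unitInterval

open Complex Set

section MotionPlanning

variable {X : Type*} [TopologicalSpace X]

theorem topologicalComplexity_le {k : ℕ} (hk : 1 ≤ k) (h : HasTCCover X k) :
    topologicalComplexity X ≤ k :=
  sInf_le ⟨k, ⟨hk, h⟩, rfl⟩

theorem isMotionSection_univ_of_hasTCCover_one (h : HasTCCover X 1) :
    IsMotionSection (univ : Set (X × X)) := by
  obtain ⟨U, -, hcover, hsection⟩ := h
  have hU : U 0 = univ := by
    simpa [iUnion_eq_univ_iff, Fin.exists_fin_one, eq_univ_iff_forall] using hcover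
  exact hU ▸ hsection 0

theorem two_le_topologicalComplexity (h : ¬ IsMotionSection (univ : Set (X × X))) :
    2 ≤ topologicalComplexity X := by
  refine le_sInf ?_
  rintro _ ⟨k, ⟨hk, hcover⟩, rfl⟩
  have : k ≠ 1 := by
    rintro rfl
    exact h (isMotionSection_univ_of_hasTCCover_one hcover)
  exact_mod_cast (by omega : 2 ≤ k)

theorem hasTCCover_two {U V : Set (X × X)} (hU : IsOpen U) (hV : IsOpen V)
    (hUV : U ∪ V = univ) (hsU : IsMotionSection U) (hsV : IsMotionSection V) :
    HasTCCover X 2 :=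
  ⟨![U, V], Fin.forall_fin_two.2 ⟨hU, hV⟩, by
    simpa [iUnion_eq_univ_iff, Fin.exists_fin_two, eq_univ_iff_forall] using hUV,
    Fin.forall_fin_two.2 ⟨hsU, hsV⟩⟩

theorem contractibleSpace_of_isMotionSection_univ [Nonempty X]
    (h : IsMotionSection (univ : Set (X × X))) : ContractibleSpace X := by
  obtain ⟨s, hs⟩ := h
  obtain ⟨x₀⟩ := ‹Nonempty X›
  rw [contractible_iff_id_nullhomotopic]
  let F : C(I × X, X) :=
    (ContinuousMap.uncurry (s.comp ⟨fun x => ⟨(x, x₀), mem_univ _⟩, by fun_prop⟩)).comp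
      ContinuousMap.prodSwap
  exact ⟨x₀, ⟨{ toContinuousMap := F
                map_zero_left := fun x => (hs ⟨(x, x₀), mem_univ _⟩).1
                map_one_left := fun x => (hs ⟨(x, x₀), mem_univ _⟩).2 }⟩⟩

theorem topologicalComplexity_eq_two {U V : Set (X × X)} (hU : IsOpen U) (hV : IsOpen V)
    (hUV : U ∪ V = univ) (hsU : IsMotionSection U) (hsV : IsMotionSection V)
    (h : ¬ IsMotionSection (univ : Set (X × X))) : topologicalComplexity X = 2 :=
  le_antisymm (topologicalComplexity_le one_le_two (hasTCCover_two hU hV hUV hsU hsV))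
    (two_le_topologicalComplexity h)

end MotionPlanning

theorem Complex.mem_slitPlane_of_norm_eq_one {z : ℂ} (hz : ‖z‖ = 1) (h : z ≠ -1) :
    z ∈ slitPlane := by
  refine mem_slitPlane_iff_arg.2 ⟨fun harg => h ?_, norm_ne_zero_iff.1 (by simp [hz])⟩
  simpa [hz, harg] using (norm_mul_exp_arg_mul_I z).symm

theorem Complex.exp_arg_mul_I_of_norm_eq_one {z : ℂ} (hz : ‖z‖ = 1) :
    exp (arg z * Complex.I) = z := by
  simpa [hz] using norm_mul_exp_arg_mul_I z

theorem Circle.not_contractibleSpace : ¬ ContractibleSpace Circle := by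
  intro _
  let e := Circle.isAddQuotientCoveringMap_exp.fundamentalGroupEquiv (x := 1) ⟨0, by simp⟩
  have : Subsingleton (AddSubgroup.zmultiples (2 * Real.pi)) :=
    (Multiplicative.ofAdd.trans (MulOpposite.opEquiv.trans e.symm.toEquiv)).subsingleton
  have h := Subsingleton.elim (⟨2 * Real.pi, AddSubgroup.mem_zmultiples _⟩ :
    AddSubgroup.zmultiples (2 * Real.pi)) 0
  simp [Subtype.ext_iff, Real.pi_ne_zero] at h

section UnitCircle

local notation "S¹" => Metric.sphere (0 : ℂ) 1

-- `Circle` is defined as the subtype `Metric.sphere (0 : ℂ) 1`.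
theorem not_contractibleSpace_sphere : ¬ ContractibleSpace S¹ :=
  Circle.not_contractibleSpace

theorem isMotionSection_of_angle {U : Set (S¹ × S¹)} (θ : U → ℝ) (hθ : Continuous θ)
    (h : ∀ p : U, exp (θ p * Complex.I) * (p.1.1 : ℂ) = p.1.2) : IsMotionSection U := by
  let F : C(U × I, S¹) :=
    ⟨fun q => ⟨exp (((q.2 : ℝ) * θ q.1 : ℝ) * Complex.I) * q.1.1.1, by
      rw [mem_sphere_zero_iff_norm, norm_mul, norm_exp_ofReal_mul_I, one_mul,
        norm_eq_of_mem_sphere]⟩,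
      by fun_prop⟩
  refine ⟨F.curry, fun p => ⟨?_, ?_⟩⟩ <;> ext <;> simp [F, h]

theorem isMotionSection_ne_neg_rotation (φ : ℝ) :
    IsMotionSection {p : S¹ × S¹ | (p.2 : ℂ) ≠ -(exp (φ * Complex.I) * p.1)} := by
  set U := {p : S¹ × S¹ | (p.2 : ℂ) ≠ -(exp (φ * Complex.I) * p.1)}
  have hne : ∀ p : S¹ × S¹, exp (φ * Complex.I) * p.1 ≠ 0 := fun p =>
    mul_ne_zero (exp_ne_zero _) (ne_zero_of_mem_unit_sphere p.1)
  let z : U → ℂ := fun p => p.1.2 / (exp (φ * Complex.I) * p.1.1)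
  have hz_cont : Continuous z :=
    Continuous.div (by fun_prop) (by fun_prop) fun p => hne p.1
  have hz_norm : ∀ p, ‖z p‖ = 1 := fun p => by simp [z, norm_exp_ofReal_mul_I]
  have hz_slit : ∀ p, z p ∈ slitPlane := fun p =>
    mem_slitPlane_of_norm_eq_one (hz_norm p) fun h =>
      p.2 (by rw [div_eq_iff (hne p.1)] at h; simpa using h)
  refine isMotionSection_of_angle (fun p => φ + arg (z p)) ?_ fun p => ?_
  · refine continuous_const.add (continuous_iff_continuousAt.2 fun p => ?_)
    exact (continuousAt_arg (hz_slit p)).comp hz_cont.continuousAt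
  · push_cast
    rw [add_mul, exp_add, exp_arg_mul_I_of_norm_eq_one (hz_norm p), mul_right_comm]
    exact mul_div_cancel₀ _ (hne p.1)

theorem isMotionSection_sphere_ne_neg :
    IsMotionSection {p : S¹ × S¹ | (p.1 : ℂ) ≠ -(p.2 : ℂ)} := by
  convert isMotionSection_ne_neg_rotation 0 using 3
  rw [ofReal_zero, zero_mul, exp_zero, one_mul, ne_comm, ne_eq, neg_eq_iff_eq_neg]

theorem isMotionSection_sphere_ne :
    IsMotionSection {p : S¹ × S¹ | (p.1 : ℂ) ≠ (p.2 : ℂ)} := by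
  convert isMotionSection_ne_neg_rotation Real.pi using 3
  simp [eq_comm]

theorem setOf_ne_neg_union_setOf_ne_eq_univ :
    {p : S¹ × S¹ | (p.1 : ℂ) ≠ -(p.2 : ℂ)} ∪ {p : S¹ × S¹ | (p.1 : ℂ) ≠ (p.2 : ℂ)} = univ := by
  refine eq_univ_of_forall fun p => ?_
  by_contra! h
  simp only [mem_union, mem_ofPred_eq, not_or, not_not] at h
  exact ne_zero_of_mem_unit_sphere p.2 (by linear_combination (h.1 - h.2) / 2)

end UnitCircle

/-- `TC(S¹) = 2`: the open sets `U₁ = {(a,b) : a ≠ -b}` and `U₂ = {(a,b) : a ≠ b}` cover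
`S¹ × S¹` and each admits a continuous local section of the path fibration, while no global
continuous section exists since `S¹` is not contractible. -/
theorem tc_circle_eq_two :
    topologicalComplexity (Metric.sphere (0 : ℂ) 1) = 2 ∧
    IsOpen {p : Metric.sphere (0 : ℂ) 1 × Metric.sphere (0 : ℂ) 1 |
      (p.1 : ℂ) ≠ -(p.2 : ℂ)} ∧
    IsOpen {p : Metric.sphere (0 : ℂ) 1 × Metric.sphere (0 : ℂ) 1 |
      (p.1 : ℂ) ≠ (p.2 : ℂ)} ∧
    {p : Metric.sphere (0 : ℂ) 1 × Metric.sphere (0 : ℂ) 1 | (p.1 : ℂ) ≠ -(p.2 : ℂ)} ∪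
      {p : Metric.sphere (0 : ℂ) 1 × Metric.sphere (0 : ℂ) 1 | (p.1 : ℂ) ≠ (p.2 : ℂ)} =
      Set.univ ∧
    IsMotionSection {p : Metric.sphere (0 : ℂ) 1 × Metric.sphere (0 : ℂ) 1 |
      (p.1 : ℂ) ≠ -(p.2 : ℂ)} ∧
    IsMotionSection {p : Metric.sphere (0 : ℂ) 1 × Metric.sphere (0 : ℂ) 1 |
      (p.1 : ℂ) ≠ (p.2 : ℂ)} ∧
    ¬ IsMotionSection (Set.univ : Set (Metric.sphere (0 : ℂ) 1 × Metric.sphere (0 : ℂ) 1)) ∧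
    ¬ ContractibleSpace (Metric.sphere (0 : ℂ) 1) := by
  have hU₁ : IsOpen {p : Metric.sphere (0 : ℂ) 1 × Metric.sphere (0 : ℂ) 1 |
      (p.1 : ℂ) ≠ -(p.2 : ℂ)} := isOpen_ne_fun (by fun_prop) (by fun_prop)
  have hU₂ : IsOpen {p : Metric.sphere (0 : ℂ) 1 × Metric.sphere (0 : ℂ) 1 |
      (p.1 : ℂ) ≠ (p.2 : ℂ)} := isOpen_ne_fun (by fun_prop) (by fun_prop)
  have hno_section : ¬ IsMotionSection (univ : Set (Metric.sphere (0 : ℂ) 1 × _)) :=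
    fun h => not_contractibleSpace_sphere (contractibleSpace_of_isMotionSection_univ h)
  exact ⟨topologicalComplexity_eq_two hU₁ hU₂ setOf_ne_neg_union_setOf_ne_eq_univ
      isMotionSection_sphere_ne_neg isMotionSection_sphere_ne hno_section,
    hU₁, hU₂, setOf_ne_neg_union_setOf_ne_eq_univ, isMotionSection_sphere_ne_neg,
    isMotionSection_sphere_ne, hno_section, not_contractibleSpace_sphere⟩
end
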